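/- arXiv:2506.06090 — 2 statements merged into one kernel-verified Lean document; each statement's English description precedes it below -/
import Mathlib

section
/- Among all probability distributions q in a given family, the conflation C·∏_k q_k(w)^{π_k} (when it lies in the family) minimizes the weighted sum Σ_k π_k KL[q ‖ q_k] over Gaussians: specifically, for univariate Gaussians q_k = N(μ_k, σ_k²) and weights π_k summing to 1, the Gaussian N(μ*, σ*²) with σ*⁻² = Σ_k π_k σ_k⁻² and μ* = σ*² Σ_k π_k μ_k/σ_k² minimizes q ↦ Σ_k π_k KL[q ‖ q_k] over all univariate Gaussians q. -/
open Finset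

/-- Closed form of KL[N(μ,σ²) ‖ N(μ',σ'²)]. -/
noncomputable def klGauss (μ σ μ' σ' : ℝ) : ℝ :=
  (1/2) * (Real.log (σ'^2 / σ^2) - 1 + σ^2 / σ'^2 + (μ' - μ)^2 / σ'^2)

/-- The conflation Gaussian N(μ*, σ*²), with σ*⁻² = Σ π_k σ_k⁻² and
μ* = σ*² Σ π_k μ_k/σ_k², minimizes q ↦ Σ_k π_k KL[q ‖ q_k] over univariate Gaussians. -/
theorem conflation_minimizes_weighted_kl (K : ℕ) (hK : 0 < K) (μs σs π : Fin K → ℝ)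
    (hσ : ∀ k, 0 < σs k) (hπ : ∀ k, 0 ≤ π k) (hsum : ∑ k, π k = 1)
    (σstar μstar : ℝ)
    (hσstar : σstar = Real.sqrt ((∑ k, π k / (σs k)^2)⁻¹))
    (hμstar : μstar = (∑ k, π k / (σs k)^2)⁻¹ * ∑ k, π k * μs k / (σs k)^2) :
    ∀ μ σ : ℝ, 0 < σ →
      ∑ k, π k * klGauss μstar σstar (μs k) (σs k) ≤
        ∑ k, π k * klGauss μ σ (μs k) (σs k) := by
  intro μ σ hσpos
  have hA : 0 < ∑ k, π k / (σs k)^2 := by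
    by_contra h
    push_neg at h
    have hA0 : ∑ k, π k / (σs k)^2 = 0 :=
      le_antisymm h (Finset.sum_nonneg fun k _ => div_nonneg (hπ k) (sq_nonneg _))
    have hall := (Finset.sum_eq_zero_iff_of_nonneg
      (fun k _ => div_nonneg (hπ k) (sq_nonneg _))).mp hA0
    have hπ0 : ∀ k, π k = 0 := by
      intro k
      have h1 := hall k (Finset.mem_univ k)
      have h2 : (σs k)^2 ≠ 0 := ne_of_gt (pow_pos (hσ k) 2)
      field_simp at h1
      exact (div_eq_zero_iff.mp h1).resolve_right h2
    simp [hπ0] at hsum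
  set A := ∑ k, π k / (σs k)^2 with hA_def
  set B := ∑ k, π k * μs k / (σs k)^2 with hB_def
  have hσstarpos : 0 < σstar := by
    rw [hσstar]; exact Real.sqrt_pos.mpr (inv_pos.mpr hA)
  have hσstar2 : σstar^2 = A⁻¹ := by
    rw [hσstar, Real.sq_sqrt (inv_nonneg.mpr hA.le)]
  have expand : ∀ ν s : ℝ, 0 < s →
      ∑ k, π k * klGauss ν s (μs k) (σs k) =
        (1/2) * (∑ k, π k * Real.log ((σs k)^2))
        + (-(1/2) * Real.log (s^2)) * (∑ k, π k)
        + (-(1/2)) * (∑ k, π k)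
        + ((1/2)*s^2) * A
        + (1/2) * (∑ k, π k * (μs k)^2 / (σs k)^2)
        + (-ν) * B
        + ((1/2)*ν^2) * A := by
    intro ν s hs
    rw [hA_def, hB_def]
    simp only [Finset.mul_sum]
    rw [← Finset.sum_add_distrib, ← Finset.sum_add_distrib, ← Finset.sum_add_distrib,
      ← Finset.sum_add_distrib, ← Finset.sum_add_distrib, ← Finset.sum_add_distrib]
    apply Finset.sum_congr rfl
    intro k _
    have h1 : (σs k)^2 ≠ 0 := ne_of_gt (pow_pos (hσ k) 2)
    have h2 : s^2 ≠ 0 := ne_of_gt (pow_pos hs 2)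
    rw [klGauss, Real.log_div h1 h2]
    field_simp
    ring
  rw [expand μ σ hσpos, expand μstar σstar hσstarpos, hsum, hσstar2]
  have hlogstar : Real.log (A⁻¹) = -Real.log A := Real.log_inv A
  have hx : 0 < σ^2 * A := mul_pos (pow_pos hσpos 2) hA
  have hlog : Real.log (σ^2 * A) ≤ σ^2 * A - 1 := Real.log_le_sub_one_of_pos hx
  have hlogσ : Real.log (σ^2) = Real.log (σ^2 * A) - Real.log A := by
    rw [Real.log_mul (ne_of_gt (pow_pos hσpos 2)) hA.ne']; ring
  have hinv : A⁻¹ * A = 1 := inv_mul_cancel₀ hA.ne'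
  rw [hlogstar, hlogσ, hμstar]
  have hAne : A ≠ 0 := hA.ne'
  have hkey : A * (μ - A⁻¹*B)^2 = μ^2*A - 2*μ*B + A⁻¹*B^2 := by
    field_simp
    ring
  have hkey2 : (A⁻¹*B)^2 * A = A⁻¹*B^2 := by
    field_simp
  nlinarith [hlog, mul_nonneg hA.le (sq_nonneg (μ - A⁻¹ * B)), hkey, hkey2, hinv]
end

section
/- Let u ∈ ℝ^F have strictly positive entries, Δ ∈ ℝ^F, and P > 0. The vector v* minimizing ‖|Δ| - v‖² subject to Σ_f u_f v_f² ≤ P and v_f ≥ 0 is: v* = |Δ| if Σ_f u_f Δ_f² ≤ P, and otherwise v*_f = |Δ_f|/(1 + λ u_f) where λ > 0 is the unique scalar satisfying Σ_f u_f (|Δ_f|/(1+λu_f))² = P. -/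
/-!
For `λ ≥ 0` the Lagrangian `∑ (aᵢ - vᵢ)² + λ ∑ uᵢ vᵢ²` splits into one-dimensional convex
quadratics `(aᵢ - x)² + λuᵢ x²`, each minimized at `aᵢ / (1 + λuᵢ)`. When this point makes the
constraint active, any feasible `v` pays a penalty of at most `λP`, exactly the penalty of the
point itself, so the point also minimizes the distance on the feasible set.
-/

open Finset

theorem isMinOn_of_forall_lagrangian_le {α : Type*} {g h : α → ℝ} {lam P : ℝ} {w : α}
    (hlam : 0 ≤ lam) (hw : h w = P) (hmin : ∀ v, g w + lam * h w ≤ g v + lam * h v) :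
    IsMinOn g {v | h v ≤ P} w := by
  refine isMinOn_iff.mpr fun v (hv : h v ≤ P) => ?_
  have := mul_le_mul_of_nonneg_left hv hlam
  linarith [hw ▸ hmin v]

theorem sq_sub_div_add_mul_sq_div_le {K : Type*} [Field K] [LinearOrder K]
    [IsStrictOrderedRing K] (a x c : K) (hc : 0 < 1 + c) :
    (a - a / (1 + c)) ^ 2 + c * (a / (1 + c)) ^ 2 ≤ (a - x) ^ 2 + c * x ^ 2 := by
  set y := a / (1 + c)
  have ha : a = (1 + c) * y := by simp only [y, mul_div_cancel₀ a hc.ne']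
  rw [ha]
  nlinarith [mul_nonneg hc.le (sq_nonneg (x - y))]

theorem isMinOn_sum_sq_sub_div_one_add_mul {ι : Type*} [Fintype ι] (a u : ι → ℝ)
    {lam P : ℝ} (hlam : 0 ≤ lam) (hpos : ∀ i, 0 < 1 + lam * u i)
    (hP : ∑ i, u i * (a i / (1 + lam * u i)) ^ 2 = P) :
    IsMinOn (fun v : ι → ℝ => ∑ i, (a i - v i) ^ 2) {v | ∑ i, u i * v i ^ 2 ≤ P}
      fun i => a i / (1 + lam * u i) := by
  refine isMinOn_of_forall_lagrangian_le hlam hP fun v => ?_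
  simp only [mul_sum, ← sum_add_distrib, ← mul_assoc]
  exact sum_le_sum fun i _ => sq_sub_div_add_mul_sq_div_le (a i) (v i) _ (hpos i)

theorem optimal_power_control_general (F : ℕ) (u Δ : Fin F → ℝ) (P : ℝ)
    (hu : ∀ f, 0 < u f) :
    ((∑ f, u f * (Δ f)^2) ≤ P →
      ∀ v : Fin F → ℝ, (∀ f, 0 ≤ v f) → (∑ f, u f * (v f)^2) ≤ P →
        ∑ f, (|Δ f| - |Δ f|)^2 ≤ ∑ f, (|Δ f| - v f)^2) ∧
    (P < ∑ f, u f * (Δ f)^2 →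
      ∀ lam : ℝ, 0 < lam →
        (∑ f, u f * (|Δ f| / (1 + lam * u f))^2) = P →
        (∀ f, 0 ≤ |Δ f| / (1 + lam * u f)) ∧
        (∑ f, u f * (|Δ f| / (1 + lam * u f))^2) ≤ P ∧
        ∀ v : Fin F → ℝ, (∀ f, 0 ≤ v f) → (∑ f, u f * (v f)^2) ≤ P →
          ∑ f, (|Δ f| - |Δ f| / (1 + lam * u f))^2 ≤ ∑ f, (|Δ f| - v f)^2) := by
  refine ⟨fun _ v _ _ => ?_, fun _ lam hlam hP => ?_⟩
  · simpa using sum_nonneg fun f _ => sq_nonneg (|Δ f| - v f)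
  · have hpos : ∀ f, 0 < 1 + lam * u f := fun f => by have := hu f; positivity
    refine ⟨fun f => by have := hpos f; positivity, hP.le, fun v _ hv => ?_⟩
    exact isMinOn_iff.mp
      (isMinOn_sum_sq_sub_div_one_add_mul (|Δ ·|) u hlam.le hpos hP) v hv

/-- Optimal power control: the minimizer of ‖|Δ| - v‖² subject to Σ u_f v_f² ≤ P, v ≥ 0
is |Δ| when feasible, and otherwise |Δ_f|/(1 + λ u_f) for the λ > 0 meeting the
power constraint with equality. -/
theorem optimal_power_control (F : ℕ) (u Δ : Fin F → ℝ) (P : ℝ)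
    (hu : ∀ f, 0 < u f) (hP : 0 < P) :
    ((∑ f, u f * (Δ f)^2) ≤ P →
      ∀ v : Fin F → ℝ, (∀ f, 0 ≤ v f) → (∑ f, u f * (v f)^2) ≤ P →
        ∑ f, (|Δ f| - |Δ f|)^2 ≤ ∑ f, (|Δ f| - v f)^2) ∧
    (P < ∑ f, u f * (Δ f)^2 →
      ∀ lam : ℝ, 0 < lam →
        (∑ f, u f * (|Δ f| / (1 + lam * u f))^2) = P →
        (∀ f, 0 ≤ |Δ f| / (1 + lam * u f)) ∧
        (∑ f, u f * (|Δ f| / (1 + lam * u f))^2) ≤ P ∧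
        ∀ v : Fin F → ℝ, (∀ f, 0 ≤ v f) → (∑ f, u f * (v f)^2) ≤ P →
          ∑ f, (|Δ f| - |Δ f| / (1 + lam * u f))^2 ≤ ∑ f, (|Δ f| - v f)^2) :=
  optimal_power_control_general F u Δ P hu
end
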